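/- arXiv:1104.3910 — 2 statements merged into one kernel-verified Lean document; each statement's English description precedes it below -/
import Mathlib

section
/- Let p be a prime, N ≥ 2, and set s = ⌈α·(log p)/(log N)⌉ for a real α > 0. If Q denotes the set of n ∈ {1, ..., N} coprime to p with q_p(n) = 0, and T denotes the number of integers w ∈ {1, ..., N^s} whose residue modulo p² is a p-th power in (ℤ/p²ℤ)^*, then (#Q)^s ≤ T · max_{m ≤ N^s} τ_s(m), where τ_s(m) is the number of ordered s-tuples of positive integers with product m. -/
open scoped Classical

/-- Fermat quotient: for gcd(u,p)=1 the unique integer in [0,p-1] congruent to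
(u^(p-1)-1)/p mod p; by convention 0 when p divides u. -/
def fermatQuotient (p : ℕ) (u : ℤ) : ℤ :=
  if (p : ℤ) ∣ u then 0 else ((u ^ (p - 1) - 1) / (p : ℤ)) % (p : ℤ)

/-- τ_s(m): number of ordered s-tuples of positive integers with product m. -/
noncomputable def tau (s m : ℕ) : ℕ :=
  Nat.card {f : Fin s → ℕ // (∀ i, 0 < f i) ∧ ∏ i, f i = m}

/-!
For `p ∤ n`, the Fermat quotient `q_p(n)` vanishes exactly when `n ^ (p - 1) ≡ 1 (mod p²)`,
and then `n ≡ n ^ p` is a `p`-th power modulo `p²`. This property is closed under products, so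
multiplying out the `s`-tuples drawn from `Q` lands in the set counted by `T`, and each value `m`
is hit by at most `τ_s(m)` tuples.
-/

open Finset

theorem fermatQuotient_eq_zero_iff {p : ℕ} (hp : p.Prime) {u : ℤ} (hu : ¬(p : ℤ) ∣ u) :
    fermatQuotient p u = 0 ↔ (u : ZMod (p ^ 2)) ^ (p - 1) = 1 := by
  have hcop : IsCoprime u p :=
    ((Nat.prime_iff_prime_int.mp hp).coprime_iff_not_dvd.mpr hu).symm
  obtain ⟨k, hk⟩ := (Int.ModEq.pow_card_sub_one_eq_one hp hcop).symm.dvd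
  have hp0 : (p : ℤ) ≠ 0 := by exact_mod_cast hp.ne_zero
  rw [fermatQuotient, if_neg hu, hk, Int.mul_ediv_cancel_left _ hp0, ← Int.dvd_iff_emod_eq_zero,
    ← mul_dvd_mul_iff_left hp0, ← hk, ← pow_two, ← Nat.cast_pow,
    ← ZMod.intCast_eq_intCast_iff_dvd_sub, Int.cast_one, Int.cast_pow, eq_comm]

theorem exists_unit_pow_succ_eq_of_pow_eq_one {M : Type*} [Monoid M] {x : M} {n : ℕ}
    (hx : x ^ n = 1) (hn : n ≠ 0) : ∃ u : Mˣ, (u : M) ^ (n + 1) = x :=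
  ⟨(IsUnit.of_pow_eq_one hx hn).unit, by rw [IsUnit.unit_spec, pow_succ, hx, one_mul]⟩

theorem tau_eq_card_filter (s m : ℕ) :
    tau s m = #{f ∈ Fintype.piFinset fun _ : Fin s => m.divisors | ∏ i, f i = m} := by
  rw [tau, ← Nat.card_eq_finsetCard]
  refine Nat.card_congr (Equiv.subtypeEquivRight fun f => ?_)
  simp only [mem_filter, Fintype.mem_piFinset, Nat.mem_divisors]
  constructor
  · rintro ⟨hpos, rfl⟩
    exact ⟨fun i => ⟨dvd_prod_of_mem f (mem_univ i), (prod_pos fun i _ => hpos i).ne'⟩, rfl⟩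
  · rintro ⟨hdvd, rfl⟩
    exact ⟨fun i => Nat.pos_of_dvd_of_pos (hdvd i).1 (Nat.pos_of_ne_zero (hdvd i).2), rfl⟩

theorem card_filter_prod_eq_le_tau {s : ℕ} {D : Finset (Fin s → ℕ)} (hD : ∀ f ∈ D, ∀ i, 0 < f i)
    (m : ℕ) : #{f ∈ D | ∏ i, f i = m} ≤ tau s m := by
  rw [tau_eq_card_filter]
  refine card_le_card fun f hf => ?_
  obtain ⟨hfD, rfl⟩ := mem_filter.mp hf
  have hpos : ∏ i, f i ≠ 0 := (prod_pos fun i _ => hD f hfD i).ne'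
  exact mem_filter.mpr ⟨Fintype.mem_piFinset.mpr fun i =>
    Nat.mem_divisors.mpr ⟨dvd_prod_of_mem f (mem_univ i), hpos⟩, rfl⟩

theorem card_pow_le_card_mul_sup_tau {A T : Finset ℕ} (hA : ∀ n ∈ A, 0 < n) {s : ℕ}
    (hAT : ∀ f ∈ Fintype.piFinset fun _ : Fin s => A, ∏ i, f i ∈ T) :
    #A ^ s ≤ #T * T.sup (tau s) := by
  set D := Fintype.piFinset fun _ : Fin s => A
  have hD : ∀ f ∈ D, ∀ i, 0 < f i := fun f hf i => hA _ (Fintype.mem_piFinset.mp hf i)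
  have himage : D.image (fun f => ∏ i, f i) ⊆ T := image_subset_iff.mpr hAT
  calc #A ^ s = #D := (Fintype.card_piFinset_const A s).symm
    _ ≤ T.sup (tau s) * #(D.image fun f => ∏ i, f i) :=
        card_le_mul_card_image D _ fun m hm =>
          (card_filter_prod_eq_le_tau hD m).trans (le_sup (himage hm))
    _ ≤ T.sup (tau s) * #T := Nat.mul_le_mul_left _ (card_le_card himage)
    _ = #T * T.sup (tau s) := mul_comm _ _

theorem card_Q_pow_le_general (p N : ℕ) (hp : p.Prime) (s : ℕ) :
    (((Finset.Icc 1 N).filter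
        (fun n : ℕ => Nat.Coprime n p ∧ fermatQuotient p (n : ℤ) = 0)).card) ^ s ≤
      (((Finset.Icc 1 (N ^ s)).filter
          (fun w : ℕ => ∃ x : (ZMod (p ^ 2))ˣ, ((x : ZMod (p ^ 2)) ^ p) = (w : ZMod (p ^ 2)))).card) *
        ((Finset.Icc 1 (N ^ s)).sup (fun m => tau s m)) := by
  refine (card_pow_le_card_mul_sup_tau (fun n hn => (mem_Icc.mp (mem_filter.mp hn).1).1)
    fun f hf => ?_).trans (Nat.mul_le_mul_left _ (sup_mono (filter_subset _ _)))
  have hQ i := mem_filter.mp (Fintype.mem_piFinset.mp hf i)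
  have hpow i : (f i : ZMod (p ^ 2)) ^ (p - 1) = 1 := by
    have hndvd : ¬(p : ℤ) ∣ f i := by
      exact_mod_cast (Nat.Prime.coprime_iff_not_dvd hp).mp (hQ i).2.1.symm
    simpa using (fermatQuotient_eq_zero_iff hp hndvd).mp (hQ i).2.2
  have hprod : ((∏ i, f i : ℕ) : ZMod (p ^ 2)) ^ (p - 1) = 1 := by
    rw [Nat.cast_prod, ← prod_pow]
    exact prod_eq_one fun i _ => hpow i
  obtain ⟨u, hu⟩ := exists_unit_pow_succ_eq_of_pow_eq_one hprod (Nat.sub_ne_zero_of_lt hp.one_lt)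
  rw [Nat.sub_add_cancel hp.one_le] at hu
  exact mem_filter.mpr ⟨mem_Icc.mpr ⟨one_le_prod' fun i _ => (mem_Icc.mp (hQ i).1).1,
    (prod_le_pow_card _ _ N fun i _ => (mem_Icc.mp (hQ i).1).2).trans_eq (by simp)⟩, u, hu⟩

theorem card_Q_pow_le (p N : ℕ) (hp : p.Prime) (hN : 2 ≤ N) (α : ℝ) (hα : 0 < α)
    (s : ℕ) (hs : s = ⌈α * Real.log p / Real.log N⌉₊) :
    (((Finset.Icc 1 N).filter
        (fun n : ℕ => Nat.Coprime n p ∧ fermatQuotient p (n : ℤ) = 0)).card) ^ s ≤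
      (((Finset.Icc 1 (N ^ s)).filter
          (fun w : ℕ => ∃ x : (ZMod (p ^ 2))ˣ, ((x : ZMod (p ^ 2)) ^ p) = (w : ZMod (p ^ 2)))).card) *
        ((Finset.Icc 1 (N ^ s)).sup (fun m => tau s m)) :=
  card_Q_pow_le_general p N hp s
end

section
/- Let p be a prime and s a positive integer. If R denotes the set of primes ℓ ≤ N with ℓ ≠ p and q_p(ℓ) = 0, and T denotes the number of integers w ∈ {1, ..., N^s} whose residue modulo p² is a p-th power in (ℤ/p²ℤ)^*, then (#R)^s ≤ s! · T. -/
open scoped Classical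

/-!
Map an `s`-tuple of primes from `R` to its product `w ∈ [1, N^s]`. Each such prime satisfies
`ℓ^(p-1) ≡ 1 (mod p²)`, hence so does `w`, and then `w ≡ w^p (mod p²)` is the `p`-th power of a
unit. By unique factorisation the fibres of this map are orbits of `Perm (Fin s)`, of size at
most `s!`.
-/

open Finset

lemma exists_perm_eq_comp_of_perm_ofFn {α : Type*} [LinearOrder α] {n : ℕ} {f g : Fin n → α}
    (h : (List.ofFn f).Perm (List.ofFn g)) : ∃ σ : Equiv.Perm (Fin n), f = g ∘ σ := by
  refine ⟨(Tuple.sort f)⁻¹.trans (Tuple.sort g), ?_⟩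
  have hsorted : f ∘ Tuple.sort f = g ∘ Tuple.sort g :=
    List.ofFn_injective <| List.Perm.eq_of_sortedLE
      (Tuple.monotone_sort f).sortedLE_ofFn (Tuple.monotone_sort g).sortedLE_ofFn
      (((Tuple.sort f).ofFn_comp_perm f).trans (h.trans ((Tuple.sort g).ofFn_comp_perm g).symm))
  funext x
  simpa using congrFun hsorted ((Tuple.sort f)⁻¹ x)

lemma Nat.exists_perm_eq_comp_of_prod_eq {n : ℕ} {v w : Fin n → ℕ}
    (hv : ∀ i, (v i).Prime) (hw : ∀ i, (w i).Prime) (h : ∏ i, v i = ∏ i, w i) :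
    ∃ σ : Equiv.Perm (Fin n), v = w ∘ σ := by
  apply exists_perm_eq_comp_of_perm_ofFn
  have hv' := Nat.primeFactorsList_unique (Fin.prod_ofFn v)
    (by simpa only [List.forall_mem_ofFn_iff] using hv)
  have hw' := Nat.primeFactorsList_unique ((Fin.prod_ofFn w).trans h.symm)
    (by simpa only [List.forall_mem_ofFn_iff] using hw)
  exact hv'.trans hw'.symm

lemma Nat.card_filter_piFinset_prod_eq_le_factorial {S : Finset ℕ} (hS : ∀ l ∈ S, l.Prime)
    (n m : ℕ) : #{v ∈ Fintype.piFinset (fun _ : Fin n => S) | ∏ i, v i = m} ≤ n.factorial := by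
  set F := {v ∈ Fintype.piFinset (fun _ : Fin n => S) | ∏ i, v i = m}
  obtain hF | ⟨v₀, hv₀⟩ := F.eq_empty_or_nonempty
  · simp [hF]
  have hprime : ∀ v ∈ F, ∀ i, (v i).Prime := fun v hv i =>
    hS _ (Fintype.mem_piFinset.mp (mem_filter.mp hv).1 i)
  have hsub : F ⊆ univ.image fun σ : Equiv.Perm (Fin n) => v₀ ∘ σ := by
    intro v hv
    obtain ⟨σ, hσ⟩ := Nat.exists_perm_eq_comp_of_prod_eq (hprime v hv) (hprime v₀ hv₀)
      ((mem_filter.mp hv).2.trans (mem_filter.mp hv₀).2.symm)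
    exact mem_image.mpr ⟨σ, mem_univ σ, hσ.symm⟩
  calc #F ≤ #(univ.image fun σ : Equiv.Perm (Fin n) => v₀ ∘ σ) := card_le_card hsub
    _ ≤ #(univ : Finset (Equiv.Perm (Fin n))) := Finset.card_image_le
    _ = n.factorial := by simp [Fintype.card_perm]

lemma Int.pow_sub_one_eq_one_of_fermatQuotient_eq_zero {p : ℕ} (hp : p.Prime) {u : ℤ}
    (hu : ¬ (p : ℤ) ∣ u) (hq : fermatQuotient p u = 0) : (u : ZMod (p ^ 2)) ^ (p - 1) = 1 := by
  rw [fermatQuotient, if_neg hu] at hq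
  have hfermat : (p : ℤ) ∣ u ^ (p - 1) - 1 :=
    (Int.ModEq.pow_card_sub_one_eq_one hp
      ((Nat.prime_iff_prime_int.mp hp).coprime_iff_not_dvd.mpr hu).symm).symm.dvd
  have hsq : ((p ^ 2 : ℕ) : ℤ) ∣ u ^ (p - 1) - 1 := by
    rw [Nat.cast_pow, sq, ← Int.mul_ediv_cancel' hfermat]
    exact mul_dvd_mul_left _ (Int.dvd_of_emod_eq_zero hq)
  have := (ZMod.intCast_zmod_eq_zero_iff_dvd _ (p ^ 2)).mpr hsq
  push_cast at this
  exact sub_eq_zero.mp this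

lemma exists_units_pow_eq_of_pow_sub_one_eq_one {M : Type*} [Monoid M] {x : M} {n : ℕ}
    (hn : 2 ≤ n) (hx : x ^ (n - 1) = 1) : ∃ y : Mˣ, (y : M) ^ n = x :=
  ⟨Units.ofPowEqOne x (n - 1) hx (by omega),
    by rw [Units.val_ofPowEqOne, ← pow_sub_one_mul (by omega), hx, one_mul]⟩

theorem card_R_pow_le_general (p N : ℕ) (hp : p.Prime) (s : ℕ) :
    (((Finset.Icc 1 N).filter
        (fun l : ℕ => l.Prime ∧ l ≠ p ∧ fermatQuotient p (l : ℤ) = 0)).card) ^ s ≤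
      s.factorial *
        (((Finset.Icc 1 (N ^ s)).filter
            (fun w : ℕ => ∃ x : (ZMod (p ^ 2))ˣ, ((x : ZMod (p ^ 2)) ^ p) = (w : ZMod (p ^ 2)))).card) := by
  set R := (Icc 1 N).filter fun l : ℕ => l.Prime ∧ l ≠ p ∧ fermatQuotient p (l : ℤ) = 0 with hR
  have hRprime : ∀ l ∈ R, l.Prime := fun l hl => (mem_filter.mp hl).2.1
  rw [← Fintype.card_piFinset_const R s]
  refine card_le_mul_card_image_of_maps_to (f := fun v : Fin s → ℕ => ∏ i, v i) (fun v hv => ?_) _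
    fun w _ => Nat.card_filter_piFinset_prod_eq_le_factorial hRprime s w
  have hvR : ∀ i, v i ∈ R := Fintype.mem_piFinset.mp hv
  simp only [hR, mem_filter, mem_Icc] at hvR
  refine mem_filter.mpr ⟨mem_Icc.mpr ⟨one_le_prod' fun i _ => (hvR i).1.1, ?_⟩, ?_⟩
  · calc ∏ i, v i ≤ ∏ _i : Fin s, N := prod_le_prod' fun i _ => (hvR i).1.2
      _ = N ^ s := by simp
  · refine exists_units_pow_eq_of_pow_sub_one_eq_one hp.two_le ?_
    push_cast
    rw [← prod_pow]
    refine prod_eq_one fun i _ => ?_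
    obtain ⟨⟨_, _⟩, hprime, hne, hq⟩ := hvR i
    have hndvd : ¬ (p : ℤ) ∣ (v i : ℤ) :=
      Int.natCast_dvd_natCast.not.mpr ((Nat.prime_dvd_prime_iff_eq hp hprime).not.mpr hne.symm)
    exact_mod_cast Int.pow_sub_one_eq_one_of_fermatQuotient_eq_zero hp hndvd hq

theorem card_R_pow_le (p N : ℕ) (hp : p.Prime) (s : ℕ) (hs : 0 < s) :
    (((Finset.Icc 1 N).filter
        (fun l : ℕ => l.Prime ∧ l ≠ p ∧ fermatQuotient p (l : ℤ) = 0)).card) ^ s ≤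
      s.factorial *
        (((Finset.Icc 1 (N ^ s)).filter
            (fun w : ℕ => ∃ x : (ZMod (p ^ 2))ˣ, ((x : ZMod (p ^ 2)) ^ p) = (w : ZMod (p ^ 2)))).card) :=
  card_R_pow_le_general p N hp s
end
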